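/- Let P, Q be stochastic matrices over Ω and σ a permutation of Ω such that the directed graphs of P and Q are isomorphic via σ and for all n, m ≥ 1 and all triples (i,j,k) with (P^n)_{ij}(P^m)_{jk} > 0 one has (P^n)_{ij}(P^m)_{jk} / (P^{n+m})_{ik} = (Q^n)_{σ(i)σ(j)}(Q^m)_{σ(j)σ(k)} / (Q^{n+m})_{σ(i)σ(k)}. If P and Q are recurrent, then P and Q are isomorphic as weighted graphs via σ, i.e., P_{ij} = Q_{σ(i)σ(j)} for all i, j. -/

import Mathlib

/-!
Conjugating `Q` by `σ` reduces the theorem to `σ = id`. On the return times of a state `i`, the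
ratio `(Q^n)_{ii} / (P^n)_{ii}` is multiplicative, hence equal to `θ^n`, and recurrence of both
chains forces `θ = 1`. The bridge condition then makes `P` and `Q` agree on cycles through `i`, so
that `(Q^n)_{ik} = r_k (P^n)_{ik}` for all `n ≥ 1` with `r_i = 1`, and `Q_{kl} = P_{kl} r_l / r_k`:
`Q` is the Doob transform of `P` by `r`. Then `min r 1` is a bounded superharmonic function,
hence harmonic since `P` is recurrent, and it attains its maximum `1` at `i`; by the maximum
principle `r ≥ 1` on the successors `j` of `i`, that is `P_{ij} ≤ Q_{ij}`. Exchanging `P` and `Q`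
gives the reverse inequality.
-/

/-- A stochastic matrix over a countable set `Ω`: nonnegative entries and each row sums to 1. -/
def IsStochastic {Ω : Type*} (P : Ω → Ω → ℝ) : Prop :=
  (∀ i j, 0 ≤ P i j) ∧ ∀ i, HasSum (fun j => P i j) 1

/-- Matrix product over a countable index set. -/
noncomputable def stochMul {Ω : Type*} (P Q : Ω → Ω → ℝ) : Ω → Ω → ℝ :=
  fun i k => ∑' j, P i j * Q j k

-- Matrix powers `P^n`.
open Classical in
noncomputable def stochPow {Ω : Type*} (P : Ω → Ω → ℝ) : ℕ → Ω → Ω → ℝ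
  | 0 => fun i j => if i = j then 1 else 0
  | n + 1 => stochMul (stochPow P n) P

/-- `i` leads to `j`: there is a path (possibly of length 0) from `i` to `j`,
i.e. `(P^n)_{ij} > 0` for some `n ≥ 0`. -/
def LeadsTo {Ω : Type*} (P : Ω → Ω → ℝ) (i j : Ω) : Prop :=
  ∃ n : ℕ, 0 < stochPow P n i j

/-- `i` and `j` communicate: each leads to the other. -/
def Communicates {Ω : Type*} (P : Ω → Ω → ℝ) (i j : Ω) : Prop :=
  LeadsTo P i j ∧ LeadsTo P j i

/-- `P` is irreducible: every pair of states communicates. -/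
def StochIrreducible {Ω : Type*} (P : Ω → Ω → ℝ) : Prop :=
  ∀ i j : Ω, Communicates P i j

/-- A state `i` is recurrent when `∑_n (P^n)_{ii} = ∞`, i.e. the series is not summable
(the entries being nonnegative). -/
def IsRecurrentState {Ω : Type*} (P : Ω → Ω → ℝ) (i : Ω) : Prop :=
  ¬ Summable (fun n : ℕ => stochPow P n i i)

/-- `P` is recurrent when every state is recurrent. -/
def IsRecurrent {Ω : Type*} (P : Ω → Ω → ℝ) : Prop :=
  ∀ i : Ω, IsRecurrentState P i

/-- `d` is the greatest common divisor of the set `S ⊆ ℕ`. -/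
def IsGCDOf (d : ℕ) (S : Set ℕ) : Prop :=
  (∀ n ∈ S, d ∣ n) ∧ ∀ e : ℕ, (∀ n ∈ S, e ∣ n) → e ∣ d

section

variable {Ω : Type*} {P Q A B : Ω → Ω → ℝ}

theorem stochMul_stochPow_zero (A P : Ω → Ω → ℝ) : stochMul A (stochPow P 0) = A := by
  funext i k
  simp [stochMul, stochPow]

theorem stochPow_succ (P : Ω → Ω → ℝ) (n : ℕ) :
    stochPow P (n + 1) = stochMul (stochPow P n) P := rfl

theorem stochPow_one (P : Ω → Ω → ℝ) : stochPow P 1 = P := by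
  funext i k
  simp [stochPow, stochMul]

namespace IsStochastic

protected theorem nonneg (hP : IsStochastic P) (i j : Ω) : 0 ≤ P i j := hP.1 i j

protected theorem hasSum (hP : IsStochastic P) (i : Ω) : HasSum (P i) 1 := hP.2 i

theorem le_one (hP : IsStochastic P) (i j : Ω) : P i j ≤ 1 :=
  (hP.hasSum i).tsum_eq ▸ (hP.hasSum i).summable.le_tsum j fun l _ => hP.nonneg i l

theorem abs_le_one (hP : IsStochastic P) (i j : Ω) : |P i j| ≤ 1 :=
  (abs_of_nonneg (hP.nonneg i j)).trans_le (hP.le_one i j)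

theorem summable_mul (hP : IsStochastic P) {f : Ω → ℝ} {C : ℝ} (hf : ∀ l, |f l| ≤ C) (k : Ω) :
    Summable fun l => P k l * f l :=
  Summable.of_norm_bounded ((hP.hasSum k).summable.mul_right C) fun l => by
    rw [norm_mul, Real.norm_of_nonneg (hP.nonneg k l)]
    exact mul_le_mul_of_nonneg_left (hf l) (hP.nonneg k l)

theorem tsum_mul_le (hP : IsStochastic P) {f : Ω → ℝ} {C : ℝ} (hf : ∀ l, |f l| ≤ C) (k : Ω) :
    ∑' l, P k l * f l ≤ C :=
  calc ∑' l, P k l * f l ≤ ∑' l, P k l * C :=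
        (hP.summable_mul hf k).tsum_le_tsum
          (fun l => mul_le_mul_of_nonneg_left ((le_abs_self _).trans (hf l)) (hP.nonneg k l))
          ((hP.hasSum k).summable.mul_right C)
    _ = C := by rw [tsum_mul_right, (hP.hasSum k).tsum_eq, one_mul]

theorem abs_tsum_mul_le (hP : IsStochastic P) {f : Ω → ℝ} {C : ℝ} (hf : ∀ l, |f l| ≤ C) (k : Ω) :
    |∑' l, P k l * f l| ≤ C :=
  abs_le.2 ⟨neg_le.1 (by simpa [tsum_neg] using hP.tsum_mul_le (f := -f) (by simpa using hf) k),
    hP.tsum_mul_le hf k⟩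

theorem hasSum_stochMul_mul (hA : IsStochastic A) (hB : IsStochastic B) {f : Ω → ℝ} {C : ℝ}
    (hf : ∀ l, |f l| ≤ C) (i : Ω) :
    HasSum (fun l => stochMul A B i l * f l) (∑' j, A i j * ∑' l, B j l * f l) := by
  have hC : 0 ≤ C := (abs_nonneg _).trans (hf i)
  set F : Ω × Ω → ℝ := fun p => A i p.1 * B p.1 p.2 * f p.2
  have hbound : Summable fun p : Ω × Ω => A i p.1 * B p.1 p.2 * C := by
    refine (summable_prod_of_nonneg fun p => by
      have := hA.nonneg i p.1; have := hB.nonneg p.1 p.2; positivity).2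
      ⟨fun j => ((hB.hasSum j).summable.mul_left (A i j)).mul_right C, ?_⟩
    simp only [mul_assoc, tsum_mul_left, tsum_mul_right, (hB.hasSum _).tsum_eq, one_mul]
    exact (hA.hasSum i).summable.mul_right C
  have hF : Summable F := hbound.of_norm_bounded fun p => by
    rw [norm_mul, Real.norm_of_nonneg (mul_nonneg (hA.nonneg i p.1) (hB.nonneg p.1 p.2))]
    exact mul_le_mul_of_nonneg_left (hf p.2) (mul_nonneg (hA.nonneg i p.1) (hB.nonneg p.1 p.2))
  have hrows : HasSum (fun j => A i j * ∑' l, B j l * f l) (∑' p, F p) :=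
    hF.hasSum.prod_fiberwise fun j => by
      simpa only [F, mul_assoc] using ((hB.summable_mul hf j).hasSum.mul_left (A i j))
  have hcols : HasSum (fun l => stochMul A B i l * f l) (∑' p, F p) := by
    refine ((Equiv.prodComm Ω Ω).hasSum_iff.2 hF.hasSum).prod_fiberwise fun l => ?_
    exact (hA.summable_mul (fun j => hB.abs_le_one j l) i).hasSum.mul_right (f l)
  exact hrows.tsum_eq ▸ hcols

protected theorem stochMul (hA : IsStochastic A) (hB : IsStochastic B) :
    IsStochastic (stochMul A B) := by
  refine ⟨fun i k => tsum_nonneg fun j => mul_nonneg (hA.nonneg i j) (hB.nonneg j k), fun i => ?_⟩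
  simpa [(hB.hasSum _).tsum_eq, (hA.hasSum i).tsum_eq] using
    hasSum_stochMul_mul hA hB (f := 1) (C := 1) (by simp) i

theorem stochMul_assoc {C : Ω → Ω → ℝ} (hA : IsStochastic A) (hB : IsStochastic B)
    (hC : IsStochastic C) : stochMul (stochMul A B) C = stochMul A (stochMul B C) := by
  funext i k
  exact (hasSum_stochMul_mul hA hB (fun l => hC.abs_le_one l k) i).tsum_eq

theorem stochMul_pos_iff (hA : IsStochastic A) (hB : IsStochastic B) {i k : Ω} :
    0 < stochMul A B i k ↔ ∃ j, 0 < A i j ∧ 0 < B j k := by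
  have hnonneg : ∀ j, 0 ≤ A i j * B j k := fun j => mul_nonneg (hA.nonneg i j) (hB.nonneg j k)
  constructor
  · intro h
    by_contra! hzero
    have : ∀ j, A i j * B j k = 0 := fun j =>
      (hA.nonneg i j).eq_or_lt.elim (fun h0 => by rw [← h0, zero_mul])
        fun hpos => by rw [(hzero j hpos).antisymm (hB.nonneg j k), mul_zero]
    simp [stochMul, this] at h
  · rintro ⟨j, hij, hjk⟩
    exact (hA.summable_mul (fun j => hB.abs_le_one j k) i).tsum_pos hnonneg j (mul_pos hij hjk)

protected theorem stochPow (hP : IsStochastic P) (n : ℕ) : IsStochastic (stochPow P n) := by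
  induction n with
  | zero =>
    refine ⟨fun i j => by simp only [stochPow]; split_ifs <;> norm_num, fun i => ?_⟩
    convert hasSum_single (f := stochPow P 0 i) i fun j hj => by simp [stochPow, Ne.symm hj]
    simp [stochPow]
  | succ n ih => exact ih.stochMul hP

theorem stochPow_add (hP : IsStochastic P) (n m : ℕ) :
    stochPow P (n + m) = stochMul (stochPow P n) (stochPow P m) := by
  induction m with
  | zero => exact (stochMul_stochPow_zero _ P).symm
  | succ m ih =>
    rw [← add_assoc, stochPow_succ, ih, stochMul_assoc (hP.stochPow n) (hP.stochPow m) hP,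
      ← stochPow_succ]

theorem stochPow_add_pos_iff (hP : IsStochastic P) {n m : ℕ} {i k : Ω} :
    0 < stochPow P (n + m) i k ↔ ∃ j, 0 < stochPow P n i j ∧ 0 < stochPow P m j k := by
  rw [hP.stochPow_add, (hP.stochPow n).stochMul_pos_iff (hP.stochPow m)]

theorem comp_perm (hQ : IsStochastic Q) (σ : Equiv.Perm Ω) :
    IsStochastic fun i j => Q (σ i) (σ j) :=
  ⟨fun i j => hQ.nonneg (σ i) (σ j), fun i => σ.hasSum_iff.2 (hQ.hasSum (σ i))⟩

end IsStochastic

theorem stochPow_pos_iff_of_pos_iff (hP : IsStochastic P) (hQ : IsStochastic Q)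
    (hPQ : ∀ i j, 0 < P i j ↔ 0 < Q i j) (n : ℕ) (i j : Ω) :
    0 < stochPow P n i j ↔ 0 < stochPow Q n i j := by
  induction n generalizing j with
  | zero => rfl
  | succ n ih =>
    simp only [stochPow_succ, (hP.stochPow n).stochMul_pos_iff hP,
      (hQ.stochPow n).stochMul_pos_iff hQ, ih, hPQ]

theorem stochPow_eq_zero_iff_of_pos_iff (hP : IsStochastic P) (hQ : IsStochastic Q)
    (hPQ : ∀ i j, 0 < P i j ↔ 0 < Q i j) (n : ℕ) (i j : Ω) :
    stochPow P n i j = 0 ↔ stochPow Q n i j = 0 := by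
  simpa only [((hP.stochPow n).nonneg i j).lt_iff_ne', ((hQ.stochPow n).nonneg i j).lt_iff_ne',
    ne_eq, not_iff_not] using stochPow_pos_iff_of_pos_iff hP hQ hPQ n i j

theorem stochPow_comp_perm (Q : Ω → Ω → ℝ) (σ : Equiv.Perm Ω) (n : ℕ) (i j : Ω) :
    stochPow (fun i j => Q (σ i) (σ j)) n i j = stochPow Q n (σ i) (σ j) := by
  induction n generalizing j with
  | zero => classical simp only [stochPow, σ.injective.eq_iff]
  | succ n ih =>
    simp only [stochPow_succ, stochMul, ih]
    exact σ.tsum_eq fun l => stochPow Q n (σ i) l * Q l (σ j)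

theorem IsRecurrentState.exists_stochPow_pos (hP : IsStochastic P) {i : Ω}
    (hi : IsRecurrentState P i) : ∃ n, 1 ≤ n ∧ 0 < stochPow P n i i := by
  by_contra! h
  refine hi (summable_of_ne_finset_zero (s := {0}) fun n hn => ?_)
  exact (h n (Nat.one_le_iff_ne_zero.2 (by simpa using hn))).antisymm ((hP.stochPow n).nonneg i i)

def IsSuperharmonic (P : Ω → Ω → ℝ) (g : Ω → ℝ) : Prop :=
  ∀ k, ∑' l, P k l * g l ≤ g k

/-- `∑_{n<N} (P^n e)_k = g_k - (P^N g)_k` for the defect `e = g - P g ≥ 0` is bounded, while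
`∑_n (P^n)_{kk} e_k` diverges unless `e_k = 0`. -/
theorem IsSuperharmonic.tsum_mul_eq (hP : IsStochastic P) (hrec : IsRecurrent P) {g : Ω → ℝ}
    {C : ℝ} (hg : IsSuperharmonic P g) (hgC : ∀ l, |g l| ≤ C) (k : Ω) :
    ∑' l, P k l * g l = g k := by
  set e : Ω → ℝ := fun l => g l - ∑' m, P l m * g m
  have he0 : ∀ l, 0 ≤ e l := fun l => sub_nonneg.2 (hg l)
  have heC : ∀ l, |e l| ≤ 2 * C := fun l => by
    have := abs_le.1 (hgC l)
    have := abs_le.1 (hP.abs_tsum_mul_le hgC l)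
    rw [abs_le]; constructor <;> linarith
  have hstep : ∀ n j, ∑' l, stochPow P (n + 1) j l * g l
      = ∑' l, stochPow P n j l * g l - ∑' l, stochPow P n j l * e l := fun n j => by
    rw [stochPow_succ, ((hP.stochPow n).hasSum_stochMul_mul hP hgC j).tsum_eq,
      ← ((hP.stochPow n).summable_mul hgC j).tsum_sub ((hP.stochPow n).summable_mul heC j)]
    simp only [e, mul_sub, sub_sub_cancel]
  have htel : ∀ N, ∑ n ∈ Finset.range N, ∑' l, stochPow P n k l * e l
      = g k - ∑' l, stochPow P N k l * g l := fun N => by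
    induction N with
    | zero => simp [stochPow]
    | succ N ih => rw [Finset.sum_range_succ, ih, hstep]; ring
  by_contra hne
  have hek : 0 < e k := (he0 k).lt_of_ne' (sub_ne_zero.2 (Ne.symm hne))
  refine hrec k ((summable_of_sum_range_le (c := 2 * C / e k)
    (fun n => (hP.stochPow n).nonneg k k) fun N => ?_))
  rw [le_div_iff₀ hek, Finset.sum_mul]
  calc ∑ n ∈ Finset.range N, stochPow P n k k * e k
      ≤ ∑ n ∈ Finset.range N, ∑' l, stochPow P n k l * e l :=
        Finset.sum_le_sum fun n _ => ((hP.stochPow n).summable_mul heC k).le_tsum k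
          fun l _ => mul_nonneg ((hP.stochPow n).nonneg k l) (he0 l)
    _ = g k - ∑' l, stochPow P N k l * g l := htel N
    _ ≤ 2 * C := by
      have := (abs_le.1 (hgC k)).2
      have := (abs_le.1 ((hP.stochPow N).abs_tsum_mul_le hgC k)).1
      linarith

theorem tsum_stochPow_mul_of_harmonic (hP : IsStochastic P) {g : Ω → ℝ} {C : ℝ}
    (hgC : ∀ l, |g l| ≤ C) (hg : ∀ k, ∑' l, P k l * g l = g k) (n : ℕ) (k : Ω) :
    ∑' l, stochPow P n k l * g l = g k := by
  induction n with
  | zero => simp [stochPow]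
  | succ n ih =>
    simp only [stochPow_succ, ((hP.stochPow n).hasSum_stochMul_mul hP hgC k).tsum_eq, hg, ih]

theorem IsStochastic.eq_of_tsum_mul_eq (hA : IsStochastic A) {g : Ω → ℝ} {C : ℝ}
    (hgC : ∀ l, |g l| ≤ C) {i j : Ω} (hmax : ∀ l, g l ≤ g i) (hmean : ∑' l, A i l * g l = g i)
    (hij : 0 < A i j) : g j = g i := by
  refine (hmax j).antisymm (not_lt.1 fun hlt => hmean.not_lt ?_)
  calc ∑' l, A i l * g l < ∑' l, A i l * g i :=
        (hA.summable_mul hgC i).tsum_lt_tsum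
          (fun l => mul_le_mul_of_nonneg_left (hmax l) (hA.nonneg i l))
          (mul_lt_mul_of_pos_left hlt hij) ((hA.hasSum i).summable.mul_right _)
    _ = g i := by rw [tsum_mul_right, (hA.hasSum i).tsum_eq, one_mul]

theorem IsSuperharmonic.eq_of_stochPow_pos (hP : IsStochastic P) (hrec : IsRecurrent P)
    {g : Ω → ℝ} {C : ℝ} (hg : IsSuperharmonic P g) (hgC : ∀ l, |g l| ≤ C) {i j : Ω} {n : ℕ}
    (hmax : ∀ l, g l ≤ g i) (hij : 0 < stochPow P n i j) : g j = g i :=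
  (hP.stochPow n).eq_of_tsum_mul_eq hgC hmax
    (tsum_stochPow_mul_of_harmonic hP hgC (hg.tsum_mul_eq hP hrec hgC) n i) hij

/-- The indicator of the states that return to `i` is superharmonic and maximal at `i`. -/
theorem IsRecurrent.exists_stochPow_pos_of_stochPow_pos (hP : IsStochastic P)
    (hrec : IsRecurrent P) {i j : Ω} {n : ℕ} (hij : 0 < stochPow P n i j) :
    ∃ m, 1 ≤ m ∧ 0 < stochPow P m j i := by
  set R : Set Ω := {k | ∃ m, 1 ≤ m ∧ 0 < stochPow P m k i}
  have hR : ∀ k l, 0 < P k l → l ∈ R → k ∈ R := fun k l hkl ⟨m, _, hli⟩ =>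
    ⟨1 + m, by omega, hP.stochPow_add_pos_iff.2 ⟨l, by rwa [stochPow_one], hli⟩⟩
  have hbound : ∀ l, |R.indicator 1 l| ≤ (1 : ℝ) := fun l => by
    by_cases hl : l ∈ R <;> simp [hl]
  have hsuper : IsSuperharmonic P (R.indicator 1) := fun k => by
    by_cases hk : k ∈ R
    · simpa [hk] using (le_abs_self _).trans (hP.abs_tsum_mul_le hbound k)
    · have : ∀ l, P k l * R.indicator 1 l = 0 := fun l => by
        by_cases hl : l ∈ R
        · simp [hl, ((hP.nonneg k l).eq_or_lt.resolve_right fun hkl => hk (hR k l hkl hl)).symm]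
        · simp [hl]
      simp [this, hk]
  have hi : i ∈ R := (hrec i).exists_stochPow_pos hP
  have hmax : ∀ l, R.indicator 1 l ≤ R.indicator (1 : Ω → ℝ) i := fun l => by
    simpa [hi] using (le_abs_self _).trans (hbound l)
  have hj := hsuper.eq_of_stochPow_pos hP hrec hbound hmax hij
  have hj0 : R.indicator (1 : Ω → ℝ) j ≠ 0 := by
    rw [hj, Set.indicator_of_mem hi]
    exact one_ne_zero
  exact (Set.mem_of_indicator_ne_zero hj0 : j ∈ R)

theorem exists_pos_forall_eq_pow {S : Set ℕ} (hS_pos : ∀ n ∈ S, 0 < n)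
    (hS_add : ∀ n ∈ S, ∀ m ∈ S, n + m ∈ S) {f : ℕ → ℝ} (hf_pos : ∀ n ∈ S, 0 < f n)
    (hf_add : ∀ n ∈ S, ∀ m ∈ S, f (n + m) = f n * f m) : ∃ θ, 0 < θ ∧ ∀ n ∈ S, f n = θ ^ n := by
  rcases S.eq_empty_or_nonempty with rfl | ⟨a, ha⟩
  · exact ⟨1, one_pos, by simp⟩
  have hmul : ∀ n ∈ S, ∀ k, 1 ≤ k → k * n ∈ S ∧ f (k * n) = f n ^ k := fun n hn k hk => by
    induction k, hk using Nat.le_induction with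
    | base => simpa using hn
    | succ k _ ih =>
      rw [add_mul, one_mul, hf_add _ ih.1 _ hn, ih.2, pow_succ]
      exact ⟨hS_add _ ih.1 _ hn, rfl⟩
  have ha0 : a ≠ 0 := (hS_pos a ha).ne'
  set θ := f a ^ ((a : ℝ)⁻¹)
  have hθ : 0 < θ := Real.rpow_pos_of_pos (hf_pos a ha) _
  refine ⟨θ, hθ, fun n hn => ?_⟩
  rw [← pow_left_inj₀ (hf_pos n hn).le (pow_nonneg hθ.le n) ha0]
  calc f n ^ a = f (a * n) := (hmul n hn a (hS_pos a ha)).2.symm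
    _ = f a ^ n := by rw [mul_comm]; exact (hmul a ha n (hS_pos n hn)).2
    _ = (θ ^ a) ^ n := by rw [Real.rpow_inv_natCast_pow (hf_pos a ha).le ha0]
    _ = (θ ^ n) ^ a := by rw [← pow_mul, ← pow_mul, mul_comm]

theorem eq_one_of_forall_eq_pow_mul {p q : ℕ → ℝ} {θ : ℝ} (hθ : 0 < θ)
    (hp0 : ∀ n, 0 ≤ p n) (hp1 : ∀ n, p n ≤ 1) (hq0 : ∀ n, 0 ≤ q n) (hq1 : ∀ n, q n ≤ 1)
    (hqp : ∀ n, q n = θ ^ n * p n) (hp : ¬Summable p) (hq : ¬Summable q) : θ = 1 := by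
  have hgeom : ∀ {c : ℝ} {u : ℕ → ℝ}, 0 ≤ c → c < 1 → (∀ n, 0 ≤ u n) → (∀ n, u n ≤ 1) →
      Summable fun n => c ^ n * u n := fun hc0 hc1 hu0 hu1 =>
    Summable.of_nonneg_of_le (fun n => mul_nonneg (pow_nonneg hc0 n) (hu0 n))
      (fun n => mul_le_of_le_one_right (pow_nonneg hc0 n) (hu1 n))
      (summable_geometric_of_lt_one hc0 hc1)
  rcases lt_trichotomy θ 1 with hlt | heq | hgt
  · refine absurd ?_ hq
    simpa only [← hqp] using hgeom hθ.le hlt hp0 hp1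
  · exact heq
  · have hpq : ∀ n, p n = θ⁻¹ ^ n * q n := fun n => by
      rw [hqp, inv_pow, inv_mul_cancel_left₀ (pow_ne_zero n hθ.ne')]
    refine absurd ?_ hp
    simpa only [← hpq] using hgeom (inv_nonneg.2 hθ.le) (inv_lt_one_of_one_lt₀ hgt) hq0 hq1

/-- `(P^n)_{ij}(P^m)_{jk}/(P^{n+m})_{ik}` is the probability that the `P`-chain bridge from `i`
to `k` of length `n + m` visits `j` at time `n`. -/
def SameBridges (P Q : Ω → Ω → ℝ) : Prop :=
  ∀ (n m : ℕ), 1 ≤ n → 1 ≤ m → ∀ i j k : Ω, 0 < stochPow P n i j * stochPow P m j k →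
    stochPow P n i j * stochPow P m j k / stochPow P (n + m) i k =
      stochPow Q n i j * stochPow Q m j k / stochPow Q (n + m) i k

namespace SameBridges

theorem stochPow_self_div_add (hb : SameBridges P Q) (hP : IsStochastic P) (hQ : IsStochastic Q)
    (hPQ : ∀ i j, 0 < P i j ↔ 0 < Q i j) {i : Ω} {n m : ℕ} (hn : 1 ≤ n) (hm : 1 ≤ m)
    (hpn : 0 < stochPow P n i i) (hpm : 0 < stochPow P m i i) :
    stochPow Q (n + m) i i / stochPow P (n + m) i i =
      stochPow Q n i i / stochPow P n i i * (stochPow Q m i i / stochPow P m i i) := by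
  have hp := hP.stochPow_add_pos_iff.2 ⟨i, hpn, hpm⟩
  have hq := (stochPow_pos_iff_of_pos_iff hP hQ hPQ (n + m) i i).1 hp
  have h := hb n m hn hm i i i (mul_pos hpn hpm)
  rw [div_eq_div_iff hp.ne' hq.ne'] at h
  rw [div_mul_div_comm, div_eq_div_iff hp.ne' (mul_pos hpn hpm).ne']
  linear_combination h

/-- On the return times of `i`, `n ↦ (Q^n)_{ii}/(P^n)_{ii}` is multiplicative, hence geometric;
recurrence of both chains forces the ratio to be `1`. -/
theorem stochPow_self_eq (hb : SameBridges P Q) (hP : IsStochastic P) (hQ : IsStochastic Q)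
    (hPQ : ∀ i j, 0 < P i j ↔ 0 < Q i j) {i : Ω} (hPi : IsRecurrentState P i)
    (hQi : IsRecurrentState Q i) (n : ℕ) : stochPow Q n i i = stochPow P n i i := by
  set p : ℕ → ℝ := fun n => stochPow P n i i
  set q : ℕ → ℝ := fun n => stochPow Q n i i
  obtain ⟨θ, hθ, hθS⟩ :=
    exists_pos_forall_eq_pow (S := {n | 0 < n ∧ 0 < p n}) (f := fun n => q n / p n)
      (fun n hn => hn.1)
      (fun n hn m hm => ⟨Nat.add_pos_left hn.1 m, hP.stochPow_add_pos_iff.2 ⟨i, hn.2, hm.2⟩⟩)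
      (fun n hn => div_pos ((stochPow_pos_iff_of_pos_iff hP hQ hPQ n i i).1 hn.2) hn.2)
      (fun n hn m hm => hb.stochPow_self_div_add hP hQ hPQ hn.1 hm.1 hn.2 hm.2)
  have hqp : ∀ n, q n = θ ^ n * p n := fun n => by
    rcases n.eq_zero_or_pos with rfl | hn
    · simp [p, q, stochPow]
    rcases ((hP.stochPow n).nonneg i i).eq_or_lt with hpn | hpn
    · simp only [p, q, ← hpn, mul_zero]
      exact (stochPow_eq_zero_iff_of_pos_iff hP hQ hPQ n i i).1 hpn.symm
    · exact (div_eq_iff hpn.ne').1 (hθS n ⟨hn, hpn⟩)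
  have hθ1 := eq_one_of_forall_eq_pow_mul hθ (fun n => (hP.stochPow n).nonneg i i)
    (fun n => (hP.stochPow n).le_one i i) (fun n => (hQ.stochPow n).nonneg i i)
    (fun n => (hQ.stochPow n).le_one i i) hqp hPi hQi
  simpa [hθ1] using hqp n

theorem mul_stochPow_eq (hb : SameBridges P Q) (hP : IsStochastic P) (hQ : IsStochastic Q)
    (hPQ : ∀ i j, 0 < P i j ↔ 0 < Q i j) {i k : Ω} (hPi : IsRecurrentState P i)
    (hQi : IsRecurrentState Q i) {n m : ℕ} (hn : 1 ≤ n) (hm : 1 ≤ m)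
    (hik : 0 < stochPow P n i k) (hki : 0 < stochPow P m k i) :
    stochPow P n i k * stochPow P m k i = stochPow Q n i k * stochPow Q m k i := by
  have h := hb n m hn hm i k i (mul_pos hik hki)
  rwa [hb.stochPow_self_eq hP hQ hPQ hPi hQi,
    div_left_inj' (hP.stochPow_add_pos_iff.2 ⟨k, hik, hki⟩).ne'] at h

theorem symm (hb : SameBridges P Q) (hP : IsStochastic P) (hQ : IsStochastic Q)
    (hPQ : ∀ i j, 0 < P i j ↔ 0 < Q i j) : SameBridges Q P := fun n m hn hm i j k h => by
  refine (hb n m hn hm i j k ?_).symm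
  have hne := mul_ne_zero_iff.1 h.ne'
  simp only [ne_eq, ← stochPow_eq_zero_iff_of_pos_iff hP hQ hPQ] at hne
  exact (mul_nonneg ((hP.stochPow n).nonneg i j) ((hP.stochPow m).nonneg j k)).lt_of_ne'
    (mul_ne_zero hne.1 hne.2)

end SameBridges

open Classical in
/-- The common value of `(Q^n)_{ik} / (P^n)_{ik}` over the `n ≥ 1` with `(P^n)_{ik} > 0`. It is
set to `1` when there is no such `n`, so that `min (stochPowRatio P Q i) 1` is superharmonic also
off the states reachable from `i`. -/
noncomputable def stochPowRatio (P Q : Ω → Ω → ℝ) (i k : Ω) : ℝ :=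
  if h : ∃ n, 1 ≤ n ∧ 0 < stochPow P n i k then
    stochPow Q h.choose i k / stochPow P h.choose i k
  else 1

theorem stochPowRatio_pos (hP : IsStochastic P) (hQ : IsStochastic Q)
    (hPQ : ∀ i j, 0 < P i j ↔ 0 < Q i j) (i k : Ω) : 0 < stochPowRatio P Q i k := by
  unfold stochPowRatio
  split_ifs with h
  · exact div_pos ((stochPow_pos_iff_of_pos_iff hP hQ hPQ _ i k).1 h.choose_spec.2) h.choose_spec.2
  · exact one_pos

namespace SameBridges

/-- Closing the paths `i → k` of lengths `n` and `n₀` by a common path `k → i` turns them into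
cycles through `i`, on which `P` and `Q` agree by `mul_stochPow_eq`. -/
theorem stochPow_eq_stochPowRatio_mul (hb : SameBridges P Q) (hP : IsStochastic P)
    (hQ : IsStochastic Q) (hPQ : ∀ i j, 0 < P i j ↔ 0 < Q i j) (hPrec : IsRecurrent P) {i : Ω}
    (hQi : IsRecurrentState Q i) (k : Ω) {n : ℕ} (hn : 1 ≤ n) :
    stochPow Q n i k = stochPowRatio P Q i k * stochPow P n i k := by
  unfold stochPowRatio
  rcases ((hP.stochPow n).nonneg i k).eq_or_lt with hzero | hpos
  · rw [← hzero, mul_zero, ← stochPow_eq_zero_iff_of_pos_iff hP hQ hPQ, hzero]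
  have h : ∃ n, 1 ≤ n ∧ 0 < stochPow P n i k := ⟨n, hn, hpos⟩
  obtain ⟨hn₀, hpos₀⟩ := h.choose_spec
  obtain ⟨m, hm, hki⟩ := hPrec.exists_stochPow_pos_of_stochPow_pos hP hpos
  have hcycle := hb.mul_stochPow_eq hP hQ hPQ (hPrec i) hQi hn hm hpos hki
  have hcycle₀ := hb.mul_stochPow_eq hP hQ hPQ (hPrec i) hQi hn₀ hm hpos₀ hki
  have hQki := (stochPow_pos_iff_of_pos_iff hP hQ hPQ m k i).1 hki
  rw [dif_pos h, div_mul_eq_mul_div, eq_div_iff hpos₀.ne']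
  refine mul_right_cancel₀ hQki.ne' ?_
  linear_combination stochPow P n i k * hcycle₀ - stochPow P h.choose i k * hcycle

theorem stochPowRatio_self (hb : SameBridges P Q) (hP : IsStochastic P)
    (hQ : IsStochastic Q) (hPQ : ∀ i j, 0 < P i j ↔ 0 < Q i j) (hPrec : IsRecurrent P) {i : Ω}
    (hQi : IsRecurrentState Q i) : stochPowRatio P Q i i = 1 := by
  obtain ⟨n, hn, hpos⟩ := (hPrec i).exists_stochPow_pos hP
  have h := hb.stochPow_eq_stochPowRatio_mul hP hQ hPQ hPrec hQi i hn
  rw [hb.stochPow_self_eq hP hQ hPQ (hPrec i) hQi] at h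
  exact (mul_eq_right₀ hpos.ne').1 h.symm

/-- `Q` is the Doob transform of `P` by `stochPowRatio P Q i` on the states reachable from `i`. -/
theorem stochPowRatio_mul_eq (hb : SameBridges P Q) (hP : IsStochastic P)
    (hQ : IsStochastic Q) (hPQ : ∀ i j, 0 < P i j ↔ 0 < Q i j) (hPrec : IsRecurrent P) {i : Ω}
    (hQi : IsRecurrentState Q i) {k : Ω} (hk : ∃ n, 1 ≤ n ∧ 0 < stochPow P n i k) (l : Ω) :
    stochPowRatio P Q i l * P k l = stochPowRatio P Q i k * Q k l := by
  obtain ⟨n, hn, hik⟩ := hk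
  rcases (hP.nonneg k l).eq_or_lt with hkl | hkl
  · rw [← hkl, ((hQ.nonneg k l).eq_or_lt.resolve_right fun h => hkl.not_lt ((hPQ k l).2 h)).symm]
    simp
  have hkl₁ : 0 < stochPow P 1 k l := by rwa [stochPow_one]
  have hil := hP.stochPow_add_pos_iff.2 ⟨k, hik, hkl₁⟩
  have h := hb n 1 hn le_rfl i k l (mul_pos hik hkl₁)
  rw [hb.stochPow_eq_stochPowRatio_mul hP hQ hPQ hPrec hQi k hn,
    hb.stochPow_eq_stochPowRatio_mul hP hQ hPQ hPrec hQi l (by omega), stochPow_one, stochPow_one,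
    div_eq_div_iff hil.ne' (mul_pos (stochPowRatio_pos hP hQ hPQ i l) hil).ne'] at h
  refine mul_left_cancel₀ (mul_pos hik hil).ne' ?_
  linear_combination h

/-- `min (stochPowRatio P Q i) 1` is superharmonic and maximal at `i`, hence `≥ 1` on the
successors of `i`. -/
theorem le (hb : SameBridges P Q) (hP : IsStochastic P) (hQ : IsStochastic Q)
    (hPQ : ∀ i j, 0 < P i j ↔ 0 < Q i j) (hPrec : IsRecurrent P) {i : Ω}
    (hQi : IsRecurrentState Q i) (j : Ω) : P i j ≤ Q i j := by
  rcases (hP.nonneg i j).eq_or_lt with hij | hij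
  · exact hij ▸ hQ.nonneg i j
  set r := stochPowRatio P Q i
  have hri : r i = 1 := hb.stochPowRatio_self hP hQ hPQ hPrec hQi
  set g : Ω → ℝ := fun k => min (r k) 1
  have hgC : ∀ l, |g l| ≤ 1 := fun l =>
    abs_le.2 ⟨by linarith [le_min (stochPowRatio_pos hP hQ hPQ i l).le zero_le_one],
      min_le_right _ _⟩
  have hsuper : IsSuperharmonic P g := fun k => by
    have hle_one := (le_abs_self _).trans (hP.abs_tsum_mul_le hgC k)
    by_cases hk : ∃ n, 1 ≤ n ∧ 0 < stochPow P n i k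
    · have hmean : HasSum (fun l => P k l * r l) (r k) := by
        have hdoob : (fun l => P k l * r l) = fun l => r k * Q k l := funext fun l => by
          rw [mul_comm]; exact hb.stochPowRatio_mul_eq hP hQ hPQ hPrec hQi hk l
        simpa only [hdoob, mul_one] using (hQ.hasSum k).mul_left (r k)
      refine le_min ((hP.summable_mul hgC k).tsum_le_tsum (fun l => ?_) hmean.summable |>.trans_eq
        hmean.tsum_eq) hle_one
      exact mul_le_mul_of_nonneg_left (min_le_left _ _) (hP.nonneg k l)
    · simpa [g, r, stochPowRatio, dif_neg hk] using hle_one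
  have hgj := hsuper.eq_of_stochPow_pos hP hPrec hgC (i := i) (n := 1)
    (fun l => by simp [g, hri]) (by rwa [stochPow_one])
  have hrj : 1 ≤ r j := by simpa [g, hri] using hgj
  have hedge : r j * P i j = r i * Q i j :=
    hb.stochPowRatio_mul_eq hP hQ hPQ hPrec hQi ((hPrec i).exists_stochPow_pos hP) j
  rw [hri, one_mul] at hedge
  calc P i j ≤ r j * P i j := le_mul_of_one_le_left hij.le hrj
    _ = Q i j := hedge

theorem eq (hb : SameBridges P Q) (hP : IsStochastic P) (hQ : IsStochastic Q)
    (hPQ : ∀ i j, 0 < P i j ↔ 0 < Q i j) (hPrec : IsRecurrent P) (hQrec : IsRecurrent Q) :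
    P = Q :=
  funext fun i => funext fun j => (hb.le hP hQ hPQ hPrec (hQrec i) j).antisymm
    ((hb.symm hP hQ hPQ).le hQ hP (fun i j => (hPQ i j).symm) hQrec (hPrec i) j)

end SameBridges

end

theorem recurrent_matrices_isomorphic_general {Ω : Type*} {P Q : Ω → Ω → ℝ}
    (hP : IsStochastic P) (hQ : IsStochastic Q)
    (hPrec : IsRecurrent P) (hQrec : IsRecurrent Q)
    (σ : Equiv.Perm Ω)
    (hgraph : ∀ i j : Ω, 0 < P i j ↔ 0 < Q (σ i) (σ j))
    (hratio : ∀ (n m : ℕ), 1 ≤ n → 1 ≤ m → ∀ i j k : Ω,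
      0 < stochPow P n i j * stochPow P m j k →
      stochPow P n i j * stochPow P m j k / stochPow P (n + m) i k =
        stochPow Q n (σ i) (σ j) * stochPow Q m (σ j) (σ k) /
          stochPow Q (n + m) (σ i) (σ k)) :
    ∀ i j : Ω, P i j = Q (σ i) (σ j) := by
  set Qσ : Ω → Ω → ℝ := fun i j => Q (σ i) (σ j)
  have hQσrec : IsRecurrent Qσ := fun i => by
    simpa only [IsRecurrentState, Qσ, stochPow_comp_perm] using hQrec (σ i)
  have hb : SameBridges P Qσ := by
    simpa only [SameBridges, Qσ, stochPow_comp_perm] using hratio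
  intro i j
  exact congrFun₂ (hb.eq hP (hQ.comp_perm σ) hgraph hPrec hQσrec) i j

/-- let `P, Q` be recurrent stochastic matrices over `Ω` and `σ` a permutation of
`Ω` giving a graph isomorphism between `P` and `Q` and satisfying the ratio condition
`(P^n)_{ij}(P^m)_{jk} / (P^{n+m})_{ik} = (Q^n)_{σi σj}(Q^m)_{σj σk} / (Q^{n+m})_{σi σk}` on all
triples with `(P^n)_{ij}(P^m)_{jk} > 0`.  Then `P` and `Q` are isomorphic as weighted graphs via
`σ`: `P_{ij} = Q_{σ(i) σ(j)}` for all `i, j`. -/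
theorem recurrent_matrices_isomorphic {Ω : Type*} [Countable Ω] {P Q : Ω → Ω → ℝ}
    (hP : IsStochastic P) (hQ : IsStochastic Q)
    (hPrec : IsRecurrent P) (hQrec : IsRecurrent Q)
    (σ : Equiv.Perm Ω)
    (hgraph : ∀ i j : Ω, 0 < P i j ↔ 0 < Q (σ i) (σ j))
    (hratio : ∀ (n m : ℕ), 1 ≤ n → 1 ≤ m → ∀ i j k : Ω,
      0 < stochPow P n i j * stochPow P m j k →
      stochPow P n i j * stochPow P m j k / stochPow P (n + m) i k =
        stochPow Q n (σ i) (σ j) * stochPow Q m (σ j) (σ k) /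
          stochPow Q (n + m) (σ i) (σ k)) :
    ∀ i j : Ω, P i j = Q (σ i) (σ j) :=
  recurrent_matrices_isomorphic_general hP hQ hPrec hQrec σ hgraph hratio
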